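/- Fix m > 1, d ≥ 1, C > 0, and let α = d/(d(m−1)+2), β = α/d, k = α(m−1)/(2md). Then the Barenblatt–Pattle profile ρ(x,t) = t^{−α} (C − k ||x||² t^{−2β})_+^{1/(m−1)} satisfies the porous medium equation ∂_t ρ = Δ(ρ^m) at all points (x,t) with t > 0 and C − k||x||² t^{−2β} > 0. -/

import Mathlib

/-! Where `u := C - k‖x‖²t^(-2β)` is positive, the profile is `t^(-α) u^p` and
`ρ^m = t^(-αm) g(‖x‖²)` with `g r = (C - k t^(-2β) r)^q`, `p = 1/(m-1)`, `q = pm = p + 1`.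
For a radial function, `Δ g(‖x‖²) = 2d g'(‖x‖²) + 4‖x‖² g''(‖x‖²)`, and since `q - 1 = p` both
sides of the equation become combinations of `u^p` and `‖x‖² u^(p-1)`. Their coefficients agree
because of the exponent relations `αm + 2β = α + 1`, `α = 2dqk` and `β = 2qk`. -/

noncomputable def laplacian {d : ℕ} (f : EuclideanSpace ℝ (Fin d) → ℝ)
    (x : EuclideanSpace ℝ (Fin d)) : ℝ :=
  ∑ i, fderiv ℝ (fun y => fderiv ℝ f y (EuclideanSpace.single i 1)) x
    (EuclideanSpace.single i 1)

open Filter Topology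

section Laplacian

variable {d : ℕ}

theorem laplacian_congr_of_eventuallyEq {f g : EuclideanSpace ℝ (Fin d) → ℝ}
    {x : EuclideanSpace ℝ (Fin d)} (h : f =ᶠ[𝓝 x] g) : laplacian f x = laplacian g x := by
  refine Finset.sum_congr rfl fun i _ => ?_
  have hpartial : (fun y => fderiv ℝ f y (EuclideanSpace.single i 1)) =ᶠ[𝓝 x]
      fun y => fderiv ℝ g y (EuclideanSpace.single i 1) :=
    (h.symm.fderiv (𝕜 := ℝ)).symm.fun_comp fun L => L (EuclideanSpace.single i 1)
  rw [hpartial.fderiv_eq]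

theorem HasDerivAt.hasFDerivAt_comp_norm_sq {g : ℝ → ℝ} {g' : ℝ} {y : EuclideanSpace ℝ (Fin d)}
    (hg : HasDerivAt g g' (‖y‖ ^ 2)) :
    HasFDerivAt (fun z : EuclideanSpace ℝ (Fin d) => g (‖z‖ ^ 2)) (g' • 2 • innerSL ℝ y) y :=
  hg.comp_hasFDerivAt y (hasStrictFDerivAt_norm_sq y).hasFDerivAt

theorem HasDerivAt.fderiv_comp_norm_sq_single {g : ℝ → ℝ} {g' : ℝ}
    {y : EuclideanSpace ℝ (Fin d)} (hg : HasDerivAt g g' (‖y‖ ^ 2)) (i : Fin d) :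
    fderiv ℝ (fun z : EuclideanSpace ℝ (Fin d) => g (‖z‖ ^ 2)) y (EuclideanSpace.single i 1)
      = g' * (2 * y i) := by
  simp [hg.hasFDerivAt_comp_norm_sq.fderiv, EuclideanSpace.inner_single_right]

theorem laplacian_comp_norm_sq {g g' : ℝ → ℝ} {g'' : ℝ} {x : EuclideanSpace ℝ (Fin d)}
    (hg : ∀ᶠ s in 𝓝 (‖x‖ ^ 2), HasDerivAt g (g' s) s) (hg' : HasDerivAt g' g'' (‖x‖ ^ 2)) :
    laplacian (fun y => g (‖y‖ ^ 2)) x = 2 * d * g' (‖x‖ ^ 2) + 4 * ‖x‖ ^ 2 * g'' := by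
  have hg_near : ∀ᶠ y in 𝓝 x, HasDerivAt g (g' (‖y‖ ^ 2)) (‖y‖ ^ 2) :=
    ((continuous_norm.pow 2).tendsto x).eventually hg
  have hdiag (i : Fin d) :
      fderiv ℝ (fun y => fderiv ℝ (fun z => g (‖z‖ ^ 2)) y (EuclideanSpace.single i 1)) x
        (EuclideanSpace.single i 1) = 2 * g' (‖x‖ ^ 2) + 4 * g'' * x i ^ 2 := by
    have hfirst : (fun y => fderiv ℝ (fun z => g (‖z‖ ^ 2)) y (EuclideanSpace.single i 1))
        =ᶠ[𝓝 x] (fun y => g' (‖y‖ ^ 2)) * fun y => 2 * y i :=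
      hg_near.mono fun y hy => hy.fderiv_comp_norm_sq_single i
    have hcoord : HasFDerivAt (fun y : EuclideanSpace ℝ (Fin d) => (2 : ℝ) * y i)
        ((2 : ℝ) • EuclideanSpace.proj i) x :=
      ((EuclideanSpace.proj (𝕜 := ℝ) i).hasFDerivAt (x := x)).const_mul (2 : ℝ)
    rw [hfirst.fderiv_eq, fderiv_mul hg'.hasFDerivAt_comp_norm_sq.differentiableAt
      hcoord.differentiableAt, hcoord.fderiv]
    simp only [add_apply, smul_apply, PiLp.proj_apply, PiLp.single_eq_same, smul_eq_mul, mul_one,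
      hg'.fderiv_comp_norm_sq_single i]
    ring
  simp only [laplacian, hdiag]
  rw [Finset.sum_add_distrib, Finset.sum_const, Finset.card_univ, Fintype.card_fin, nsmul_eq_mul,
    ← Finset.mul_sum, EuclideanSpace.real_norm_sq_eq x]
  ring

end Laplacian

theorem hasDerivAt_const_mul_rpow_affine {a b c q s : ℝ} (hs : 0 < a - b * s) :
    HasDerivAt (fun r => c * (a - b * r) ^ q) (-(c * q * b) * (a - b * s) ^ (q - 1)) s := by
  have haff : HasDerivAt (fun r => a - b * r) (-b) s := by
    simpa using ((hasDerivAt_id s).const_mul b).const_sub a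
  exact ((haff.rpow_const (Or.inl hs.ne')).const_mul c).congr_deriv (by ring)

theorem hasDerivAt_rpow_mul_rpow_sub_rpow {α γ C K p t : ℝ} (ht : 0 < t)
    (hu : 0 < C - K * t ^ (-γ)) :
    HasDerivAt (fun s => s ^ (-α) * (C - K * s ^ (-γ)) ^ p)
      (-α * t ^ (-α - 1) * (C - K * t ^ (-γ)) ^ p
        + t ^ (-α) * (γ * K * t ^ (-γ - 1) * p * (C - K * t ^ (-γ)) ^ (p - 1))) t := by
  have hinner : HasDerivAt (fun s => C - K * s ^ (-γ)) (γ * K * t ^ (-γ - 1)) t :=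
    (((Real.hasDerivAt_rpow_const (Or.inl ht.ne')).const_mul K).const_sub C).congr_deriv
      (by ring)
  exact (Real.hasDerivAt_rpow_const (Or.inl ht.ne')).mul (hinner.rpow_const (Or.inl hu.ne'))

section Profile

variable {d : ℕ} {α β k C p : ℝ} {ρ : EuclideanSpace ℝ (Fin d) → ℝ → ℝ}
  {x : EuclideanSpace ℝ (Fin d)} {t : ℝ}

theorem hasDerivAt_profile_time
    (hρ : ∀ x t, ρ x t = t ^ (-α) * (max (C - k * ‖x‖ ^ 2 * t ^ (-(2 * β))) 0) ^ p)
    (ht : 0 < t) (hpos : 0 < C - k * ‖x‖ ^ 2 * t ^ (-(2 * β))) :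
    HasDerivAt (fun s => ρ x s)
      (-α * t ^ (-α - 1) * (C - k * ‖x‖ ^ 2 * t ^ (-(2 * β))) ^ p
        + t ^ (-α) * (2 * β * (k * ‖x‖ ^ 2) * t ^ (-(2 * β) - 1) * p
          * (C - k * ‖x‖ ^ 2 * t ^ (-(2 * β))) ^ (p - 1))) t := by
  have hcont : ContinuousAt (fun s => C - k * ‖x‖ ^ 2 * s ^ (-(2 * β))) t := by
    fun_prop (disch := exact Or.inl ht.ne')
  refine (hasDerivAt_rpow_mul_rpow_sub_rpow ht hpos).congr_of_eventuallyEq ?_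
  filter_upwards [continuousAt_const.eventually_lt hcont hpos] with s hs
  rw [hρ, max_eq_left hs.le]

theorem laplacian_rpow_profile (m : ℝ)
    (hρ : ∀ x t, ρ x t = t ^ (-α) * (max (C - k * ‖x‖ ^ 2 * t ^ (-(2 * β))) 0) ^ p)
    (ht : 0 < t) (hpos : 0 < C - k * ‖x‖ ^ 2 * t ^ (-(2 * β))) :
    laplacian (fun y => ρ y t ^ m) x
      = t ^ (-(α * m)) * (p * m) * k * t ^ (-(2 * β))
        * (-(2 * d) * (C - k * ‖x‖ ^ 2 * t ^ (-(2 * β))) ^ (p * m - 1)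
          + 4 * (p * m - 1) * k * t ^ (-(2 * β)) * ‖x‖ ^ 2
            * (C - k * ‖x‖ ^ 2 * t ^ (-(2 * β))) ^ (p * m - 1 - 1)) := by
  set b := k * t ^ (-(2 * β))
  have hρm_near : (fun y => ρ y t ^ m) =ᶠ[𝓝 x]
      fun y => t ^ (-(α * m)) * (C - b * ‖y‖ ^ 2) ^ (p * m) := by
    have hcont : Continuous fun y : EuclideanSpace ℝ (Fin d) =>
        C - k * ‖y‖ ^ 2 * t ^ (-(2 * β)) := by
      fun_prop
    filter_upwards [continuousAt_const.eventually_lt hcont.continuousAt hpos] with y hy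
    rw [hρ, max_eq_left hy.le, Real.mul_rpow (by positivity) (by positivity),
      ← Real.rpow_mul ht.le, ← Real.rpow_mul hy.le, mul_right_comm k, neg_mul]
  have hpos' : 0 < C - b * ‖x‖ ^ 2 := by linarith
  have hcont : ContinuousAt (fun r => C - b * r) (‖x‖ ^ 2) := by fun_prop
  have hg : ∀ᶠ r in 𝓝 (‖x‖ ^ 2),
      HasDerivAt (fun r => t ^ (-(α * m)) * (C - b * r) ^ (p * m))
        (-(t ^ (-(α * m)) * (p * m) * b) * (C - b * r) ^ (p * m - 1)) r :=
    (continuousAt_const.eventually_lt hcont hpos').mono fun r hr =>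
      hasDerivAt_const_mul_rpow_affine hr
  rw [laplacian_congr_of_eventuallyEq hρm_near,
    laplacian_comp_norm_sq hg (hasDerivAt_const_mul_rpow_affine hpos'),
    show C - b * ‖x‖ ^ 2 = C - k * ‖x‖ ^ 2 * t ^ (-(2 * β)) by ring]
  ring

end Profile

theorem barenblatt_exponents {d : ℕ} (hd : 1 ≤ d) {m α β k : ℝ} (hm : 1 < m)
    (hα : α = d / (d * (m - 1) + 2)) (hβ : β = α / d) (hk : k = α * (m - 1) / (2 * m * d)) :
    α * m + 2 * β = α + 1 ∧ α = 2 * d * (m / (m - 1)) * k ∧ β = 2 * (m / (m - 1)) * k := by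
  have hd : (0 : ℝ) < d := by exact_mod_cast hd
  have hm1 : m - 1 ≠ 0 := by linarith
  have hm0 : m ≠ 0 := by linarith
  have hD : (d : ℝ) * (m - 1) + 2 ≠ 0 := by nlinarith
  refine ⟨?_, ?_, ?_⟩
  · rw [hβ, hα]
    field_simp
    ring
  · rw [hk]
    field_simp
  · rw [hk, hβ]
    field_simp

theorem stmt_15_general {d : ℕ} (hd : 1 ≤ d) (m C α β k : ℝ)
    (hm : 1 < m)
    (hα : α = d / (d * (m - 1) + 2)) (hβ : β = α / d)
    (hk : k = α * (m - 1) / (2 * m * d))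
    (ρ : EuclideanSpace ℝ (Fin d) → ℝ → ℝ)
    (hρ : ∀ x t, ρ x t
        = t ^ (-α) * (max (C - k * ‖x‖ ^ 2 * t ^ (-(2 * β))) 0) ^ (1 / (m - 1)))
    (x : EuclideanSpace ℝ (Fin d)) (t : ℝ) (ht : 0 < t)
    (hpos : 0 < C - k * ‖x‖ ^ 2 * t ^ (-(2 * β))) :
    deriv (fun s => ρ x s) t = laplacian (fun y => ρ y t ^ m) x := by
  obtain ⟨hexp, hαq, hβq⟩ := barenblatt_exponents hd hm hα hβ hk
  have hq : m / (m - 1) - 1 = 1 / (m - 1) := by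
    have : m - 1 ≠ 0 := by linarith
    field_simp
    ring
  have hT : t ^ (-(α * m)) * t ^ (-(2 * β)) = t ^ (-α - 1) := by
    rw [← Real.rpow_add ht]
    congr 1
    linarith
  have hTT : t ^ (-(α * m)) * t ^ (-(2 * β)) * t ^ (-(2 * β))
      = t ^ (-α) * t ^ (-(2 * β) - 1) := by
    rw [hT, ← Real.rpow_add ht, ← Real.rpow_add ht]
    ring_nf
  rw [(hasDerivAt_profile_time hρ ht hpos).deriv, laplacian_rpow_profile m hρ ht hpos,
    one_div_mul_eq_div, hq]
  set u := C - k * ‖x‖ ^ 2 * t ^ (-(2 * β))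
  set p := 1 / (m - 1)
  set q := m / (m - 1)
  linear_combination -(t ^ (-α - 1) * u ^ p) * hαq + 2 * d * q * k * u ^ p * hT
    + 2 * k * ‖x‖ ^ 2 * p * t ^ (-α) * t ^ (-(2 * β) - 1) * u ^ (p - 1) * hβq
    - 4 * q * k ^ 2 * ‖x‖ ^ 2 * p * u ^ (p - 1) * hTT

theorem stmt_15 {d : ℕ} (hd : 1 ≤ d) (m C α β k : ℝ)
    (hm : 1 < m) (hC : 0 < C)
    (hα : α = d / (d * (m - 1) + 2)) (hβ : β = α / d)
    (hk : k = α * (m - 1) / (2 * m * d))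
    (ρ : EuclideanSpace ℝ (Fin d) → ℝ → ℝ)
    (hρ : ∀ x t, ρ x t
        = t ^ (-α) * (max (C - k * ‖x‖ ^ 2 * t ^ (-(2 * β))) 0) ^ (1 / (m - 1)))
    (x : EuclideanSpace ℝ (Fin d)) (t : ℝ) (ht : 0 < t)
    (hpos : 0 < C - k * ‖x‖ ^ 2 * t ^ (-(2 * β))) :
    deriv (fun s => ρ x s) t = laplacian (fun y => ρ y t ^ m) x :=
  stmt_15_general hd m C α β k hm hα hβ hk ρ hρ x t ht hpos
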